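/- (Tensor stability of the cancellation condition) Let k ∈ ℤ₊ and let {H_s^{(1)} : s ∈ ℝ₊^k} and {H_s^{(2)} : s ∈ ℝ₊^k} be families of bounded operators on L²(ℝ^{d₁}) and L²(ℝ^{d₂}) respectively such that for every K ⊆ [k] and admissible s, h (i.e. s and s+h in a common cube Q), ‖Δ_h^K H_s^{(i)}‖_{L²→L²} ≲ Π_{j ∈ K} (h_j/s_j). Then the tensor product family {H_s^{(1)} ⊗ H_s^{(2)} : s ∈ ℝ₊^k} on L²(ℝ^{d₁+d₂}) satisfies the same estimate, with implicit constant depending on k: for all K ⊆ [k] and admissible s, h, ‖Δ_h^K (H_s^{(1)} ⊗ H_s^{(2)})‖_{L²→L²} ≲_k Π_{j ∈ K} (h_j/s_j). -/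

import Mathlib

/-!
On simple tensors, the discrete Leibniz rule (a consequence of Möbius inversion on the Boolean
lattice of subsets of `K`) gives
`Δ_h^K (H¹ ⊗ H²)_s = ∑_{V ⊆ K} Δ_h^V H¹_s ⊗ T_h^V Δ_h^{K∖V} H²_s`.
An operator acting as `∑ A_V ⊗ B_V` on simple tensors has norm at most `∑ ‖A_V‖ ‖B_V‖`: for a
finite sum `u = ∑ fᵢ ⊗ gᵢ`, Fubini writes `‖(A ⊗ 1) u‖²` as the integral over `y` of
`‖A (∑ gᵢ(y) fᵢ)‖²`, and such finite sums are dense in `L²(μ × ν)` by a π-λ argument over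
measurable rectangles. Each factor is bounded by the hypothesis at an admissible pair inside the
box `[s, s + h] ⊆ Q`, and each of the `2^|K|` terms is then `≲ ∏_{j ∈ K} h_j / s_j`.
-/

open Set MeasureTheory ENNReal NNReal

/-- Mixed partial difference operator `Δ_h^K` of a family `H` of vectors parametrized by
`s ∈ ℝ^k`, in closed form: `Δ_h^K H_s = Σ_{U ⊆ K} (−1)^{|K∖U|} H_{s + Σ_{i∈U} h_i e_i}`. -/
noncomputable def deltaK {k : ℕ} {E : Type*} [AddCommGroup E] [Module ℂ E]
    (H : (Fin k → ℝ) → E) (K : Finset (Fin k)) (h s : Fin k → ℝ) : E :=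
  ∑ U ∈ K.powerset,
    ((-1 : ℂ) ^ (K.card - U.card)) • H (fun i => if i ∈ U then s i + h i else s i)

open Filter Topology MeasurableSpace TensorProduct
open scoped symmDiff

section MixedDiff

open Finset

variable {ι M N P : Type*} [AddCommGroup M] [AddCommGroup N] [AddCommGroup P]

def mixedDiff (a : Finset ι → M) (K : Finset ι) : M :=
  ∑ U ∈ K.powerset, (-1 : ℤ) ^ (#K - #U) • a U

theorem Finset.sum_Icc_eq_sum_powerset_sdiff [DecidableEq ι] {V K : Finset ι} (hVK : V ⊆ K)
    (F : Finset ι → M) :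
    ∑ U ∈ Icc V K, F U = ∑ W ∈ (K \ V).powerset, F (V ∪ W) := by
  rw [Icc_eq_image_powerset hVK, sum_image]
  intro W₁ hW₁ W₂ hW₂ h
  simp only [coe_powerset, Set.mem_preimage, Set.mem_powerset_iff, coe_subset] at hW₁ hW₂ h
  rw [← union_sdiff_cancel_left (disjoint_of_subset_right hW₁ disjoint_sdiff),
    ← union_sdiff_cancel_left (disjoint_of_subset_right hW₂ disjoint_sdiff), h]

theorem Finset.sum_powerset_sum_powerset [DecidableEq ι] (K : Finset ι)
    (G : Finset ι → Finset ι → M) :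
    ∑ U ∈ K.powerset, ∑ V ∈ U.powerset, G U V
      = ∑ V ∈ K.powerset, ∑ W ∈ (K \ V).powerset, G (V ∪ W) V := by
  rw [sum_comm' (t' := K.powerset) (s' := fun V => Icc V K) (fun U V => by
    simp only [mem_powerset, mem_Icc]; constructor
    · rintro ⟨hUK, hVU⟩; exact ⟨⟨hVU, hUK⟩, hVU.trans hUK⟩
    · rintro ⟨⟨hVU, hUK⟩, -⟩; exact ⟨hUK, hVU⟩)]
  exact sum_congr rfl fun V hV => sum_Icc_eq_sum_powerset_sdiff (mem_powerset.1 hV) _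

theorem sum_powerset_mixedDiff [DecidableEq ι] (a : Finset ι → M) (K : Finset ι) :
    ∑ U ∈ K.powerset, mixedDiff a U = a K := by
  have hsign : ∀ W ∈ K.powerset,
      ∑ W' ∈ (K \ W).powerset, (-1 : ℤ) ^ (#(W ∪ W') - #W) • a W = if W = K then a W else 0 := by
    intro W hW
    have hcard : ∀ W' ∈ (K \ W).powerset, #(W ∪ W') - #W = #W' := fun W' hW' => by
      rw [card_union_of_disjoint (disjoint_of_subset_right (mem_powerset.1 hW') disjoint_sdiff)]
      omega
    rw [sum_congr rfl fun W' hW' => by rw [hcard W' hW'], ← sum_smul,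
      sum_powerset_neg_one_pow_card]
    by_cases h : W = K
    · simp [h]
    · have : ¬K ⊆ W := fun hKW => h (subset_antisymm (mem_powerset.1 hW) hKW)
      simp [h, sdiff_eq_empty_iff_subset, this]
  simp only [mixedDiff]
  rw [sum_powerset_sum_powerset K (fun U W => (-1 : ℤ) ^ (#U - #W) • a W), sum_congr rfl hsign,
    sum_ite_eq' _ _ _, if_pos (mem_powerset_self K)]

theorem map_mixedDiff {F : Type*} [FunLike F M N] [AddMonoidHomClass F M N] (φ : F)
    (a : Finset ι → M) (K : Finset ι) : φ (mixedDiff a K) = mixedDiff (fun U => φ (a U)) K := by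
  simp [mixedDiff, map_sum, map_zsmul]

theorem mixedDiff_leibniz [DecidableEq ι] {R : Type*} [CommSemiring R] [Module R M] [Module R N]
    [Module R P]     (β : M →ₗ[R] N →ₗ[R] P) (a : Finset ι → M) (b : Finset ι → N) (K : Finset ι) :
    mixedDiff (fun U => β (a U) (b U)) K
      = ∑ V ∈ K.powerset, β (mixedDiff a V) (mixedDiff (fun W => b (V ∪ W)) (K \ V)) := by
  have hcard : ∀ V ∈ K.powerset, ∀ W ∈ (K \ V).powerset, #(K \ V) - #W = #K - #(V ∪ W) := by
    intro V hV W hW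
    have hWV := Finset.card_le_card (mem_powerset.1 hW)
    rw [card_union_of_disjoint (disjoint_of_subset_right (mem_powerset.1 hW) disjoint_sdiff),
      card_sdiff_of_subset (mem_powerset.1 hV)] at *
    omega
  calc mixedDiff (fun U => β (a U) (b U)) K
      = ∑ U ∈ K.powerset, (-1 : ℤ) ^ (#K - #U) • β (∑ V ∈ U.powerset, mixedDiff a V) (b U) := by
        simp only [sum_powerset_mixedDiff]; rfl
    _ = ∑ U ∈ K.powerset, ∑ V ∈ U.powerset, (-1 : ℤ) ^ (#K - #U) • β (mixedDiff a V) (b U) := by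
        simp only [map_sum, LinearMap.sum_apply, smul_sum]
    _ = ∑ V ∈ K.powerset, ∑ W ∈ (K \ V).powerset,
          (-1 : ℤ) ^ (#(K \ V) - #W) • β (mixedDiff a V) (b (V ∪ W)) := by
        rw [sum_powerset_sum_powerset]
        exact sum_congr rfl fun V hV => sum_congr rfl fun W hW => by rw [hcard V hV W hW]
    _ = _ := by simp only [mixedDiff, map_sum, map_zsmul]

theorem Finset.sum_powerset_mul_prod_mul_prod_sdiff [DecidableEq ι] {R : Type*} [CommSemiring R]
    (K : Finset ι) (c d : R) (a : ι → R) :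
    ∑ V ∈ K.powerset, (c * ∏ i ∈ V, a i) * (d * ∏ i ∈ K \ V, a i)
      = 2 ^ #K * (c * d) * ∏ i ∈ K, a i :=
  calc _ = ∑ _V ∈ K.powerset, c * d * ∏ i ∈ K, a i :=
        sum_congr rfl fun V hV => by rw [← prod_sdiff (mem_powerset.1 hV)]; ring
    _ = _ := by
        rw [sum_const, card_powerset, nsmul_eq_mul]
        push_cast
        ring

end MixedDiff

namespace MeasureTheory

section Density

variable {α E : Type*} [m : MeasurableSpace α] {μ : Measure α} [NormedAddCommGroup E]
  {p : ℝ≥0∞}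

theorem tendsto_measure_symmDiff_iUnion {F : ℕ → Set α} (hF : Monotone F)
    (hmeas : ∀ n, MeasurableSet (F n)) (hfin : μ (⋃ n, F n) ≠ ∞) :
    Tendsto (fun n => μ (F n ∆ ⋃ n, F n)) atTop (𝓝 0) := by
  simp_rw [symmDiff_of_le (subset_iUnion F _)]
  have hlim := tendsto_measure_iInter_atTop (μ := μ) (s := fun n => (⋃ i, F i) \ F n)
    (fun n => ((MeasurableSet.iUnion hmeas).diff (hmeas n)).nullMeasurableSet)
    (fun _ _ hmn => sdiff_subset_sdiff_right (hF hmn))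
    ⟨0, ne_top_of_le_ne_top hfin (measure_mono sdiff_subset)⟩
  rwa [← sdiff_iUnion, sdiff_self, measure_empty] at hlim

def Lp.IndicatorsMem (S : AddSubgroup (Lp E p μ)) (s : Set α) : Prop :=
  ∀ (hs : MeasurableSet s) (hμs : μ s ≠ ∞) (c : E), indicatorConstLp p hs hμs c ∈ S

namespace Lp.IndicatorsMem

variable {S : AddSubgroup (Lp E p μ)}

theorem union {s t : Set α} (hs : MeasurableSet s) (ht : MeasurableSet t) (hst : Disjoint s t)
    (hSs : IndicatorsMem S s) (hSt : IndicatorsMem S t) : IndicatorsMem S (s ∪ t) := by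
  intro _ hμ c
  have hμs := ne_top_of_le_ne_top hμ (measure_mono subset_union_left)
  have hμt := ne_top_of_le_ne_top hμ (measure_mono subset_union_right)
  rw [indicatorConstLp_disjoint_union hs ht hμs hμt hst]
  exact add_mem (hSs hs hμs c) (hSt ht hμt c)

theorem iUnion [Fact (1 ≤ p)] (hp : p ≠ ∞) (hS : IsClosed (S : Set (Lp E p μ)))
    {F : ℕ → Set α} (hF : Monotone F) (hmeas : ∀ n, MeasurableSet (F n))
    (hSF : ∀ n, IndicatorsMem S (F n)) : IndicatorsMem S (⋃ n, F n) := by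
  intro _ hμ c
  have hμF n : μ (F n) ≠ ∞ := ne_top_of_le_ne_top hμ (measure_mono (subset_iUnion F n))
  exact hS.mem_of_tendsto (tendsto_indicatorConstLp_set (ht := hmeas) (hμt := hμF) hp
    (tendsto_measure_symmDiff_iUnion hF hmeas hμ)) (Eventually.of_forall fun n => hSF n _ _ c)

end Lp.IndicatorsMem

open Lp.IndicatorsMem in
/-- Dynkin's π-λ argument, localized to the sets `R n` so that all indicators involved have finite
measure. -/
theorem Lp.indicatorsMem_inter [Fact (1 ≤ p)] (hp : p ≠ ∞) {S : AddSubgroup (Lp E p μ)}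
    (hS : IsClosed (S : Set (Lp E p μ))) {C : Set (Set α)} (hgen : m = generateFrom C)
    (hC : IsPiSystem C) {R : ℕ → Set α} (hRC : ∀ n, R n ∈ C) (hRfin : ∀ n, μ (R n) ≠ ∞)
    (hind : ∀ t ∈ C, ∀ n, IndicatorsMem S (t ∩ R n)) {t : Set α} (ht : MeasurableSet t) (n : ℕ) :
    IndicatorsMem S (t ∩ R n) := by
  have hmeasC : ∀ t ∈ C, MeasurableSet t := fun t ht => hgen ▸ measurableSet_generateFrom ht
  have hmeasR n : MeasurableSet (R n) := hmeasC _ (hRC n)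
  induction t, ht using MeasurableSpace.induction_on_inter hgen hC generalizing n with
  | empty => intro _ _ c; simp
  | basic t ht => exact hind t ht n
  | compl t ht hSt =>
    intro hs hμs c
    have hSR : IndicatorsMem S (t ∩ R n ∪ tᶜ ∩ R n) := by
      rw [← union_inter_distrib_right, union_compl_self, univ_inter, ← inter_self (R n)]
      exact hind _ (hRC n) n
    have htR := ht.inter (hmeasR n)
    have hμtR : μ (t ∩ R n) ≠ ∞ := ne_top_of_le_ne_top (hRfin n) (measure_mono inter_subset_right)
    have hsum := hSR (htR.union hs) (measure_union_ne_top hμtR hμs) c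
    rw [indicatorConstLp_disjoint_union htR hs hμtR hμs
      (disjoint_compl_right.mono inter_subset_left inter_subset_left)] at hsum
    exact (add_mem_cancel_left (hSt n htR hμtR c)).1 hsum
  | iUnion f hdisj hmeas hSf =>
    let g i := f i ∩ R n
    have hg i : MeasurableSet (g i) := (hmeas i).inter (hmeasR n)
    have hSacc : ∀ i, IndicatorsMem S (accumulate g i) := by
      intro i
      induction i with
      | zero => simpa using hSf 0 n
      | succ i ih =>
        rw [accumulate_succ]
        exact union (.biUnion (to_countable _) fun j _ => hg j) (hg _)
          (disjoint_accumulate (fun i j hij => (hdisj hij).mono inter_subset_left inter_subset_left)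
            i.lt_succ_self) ih (hSf _ n)
    rw [iUnion_inter, ← iUnion_accumulate]
    exact iUnion hp hS monotone_accumulate (fun i => .biUnion (to_countable _) fun j _ => hg j)
      hSacc

theorem Lp.addSubgroup_eq_top_of_indicatorsMem [Fact (1 ≤ p)] (hp : p ≠ ∞)
    {S : AddSubgroup (Lp E p μ)} (hS : IsClosed (S : Set (Lp E p μ))) {C : Set (Set α)}
    (hgen : m = generateFrom C) (hC : IsPiSystem C) {R : ℕ → Set α} (hRC : ∀ n, R n ∈ C)
    (hR : Monotone R) (hRfin : ∀ n, μ (R n) ≠ ∞) (hRcover : ⋃ n, R n = univ)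
    (hind : ∀ t ∈ C, ∀ n, IndicatorsMem S (t ∩ R n)) :
    S = ⊤ := by
  rw [eq_top_iff]
  intro u _
  refine Lp.induction hp (· ∈ S) (fun c s hs hμs => ?_) (fun _ _ _ _ _ => add_mem) hS u
  have hsR : ⋃ n, s ∩ R n = s := by rw [← inter_iUnion, hRcover, inter_univ]
  have hmeasR n : MeasurableSet (R n) := hgen ▸ measurableSet_generateFrom (hRC n)
  have hSs := IndicatorsMem.iUnion hp hS (F := fun n => s ∩ R n)
    (fun _ _ hmn => inter_subset_inter_right _ (hR hmn)) (fun n => hs.inter (hmeasR n))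
    (fun n => indicatorsMem_inter hp hS hgen hC hRC hRfin hind hs n)
  rw [hsR] at hSs
  rw [Lp.simpleFunc.coe_indicatorConst]
  exact hSs hs hμs.ne c

end Density

section Tensor

variable {𝕜 X Y ι : Type*} [RCLike 𝕜] [MeasurableSpace X] [MeasurableSpace Y]
  {μ : Measure X} {ν : Measure Y}

theorem eLpNorm_two_sq {α E : Type*} [MeasurableSpace α] [NormedAddCommGroup E] {μ : Measure α}
    (f : α → E) : eLpNorm f 2 μ ^ 2 = ∫⁻ x, ‖f x‖ₑ ^ 2 ∂μ := by
  rw [eLpNorm_eq_lintegral_rpow_enorm_toReal two_ne_zero ofNat_ne_top, ← ENNReal.rpow_natCast,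
    ← ENNReal.rpow_mul]
  norm_num

theorem Lp.coeFn_sum_smul {α E : Type*} [MeasurableSpace α] [NormedAddCommGroup E]
    [NormedSpace 𝕜 E] {μ : Measure α} {p : ℝ≥0∞} (s : Finset ι) (c : ι → 𝕜) (f : ι → Lp E p μ) :
    ⇑(∑ i ∈ s, c i • f i) =ᵐ[μ] fun x => ∑ i ∈ s, c i • f i x := by
  classical
  induction s using Finset.induction_on with
  | empty =>
    simp only [Finset.sum_empty]
    exact Lp.coeFn_zero E p μ
  | insert a s ha ih =>
    filter_upwards [Lp.coeFn_add (c a • f a) (∑ i ∈ s, c i • f i), Lp.coeFn_smul (c a) (f a), ih]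
      with x hadd hsmul hsum
    rw [Finset.sum_insert ha, Finset.sum_insert ha, hadd, Pi.add_apply, hsmul, hsum, Pi.smul_apply]

theorem norm_le_opNorm_mul_of_enorm_sq_eq_lintegral {Z E F G H : Type*} [MeasurableSpace Z]
    {ρ : Measure Z} [SeminormedAddCommGroup E] [SeminormedAddCommGroup F] [NormedSpace 𝕜 E]
    [NormedSpace 𝕜 F] [SeminormedAddCommGroup G] [SeminormedAddCommGroup H] (A : E →L[𝕜] F)
    (v : Z → E) {u : G} {u' : H} (hu : ‖u‖ₑ ^ 2 = ∫⁻ z, ‖v z‖ₑ ^ 2 ∂ρ)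
    (hu' : ‖u'‖ₑ ^ 2 = ∫⁻ z, ‖A (v z)‖ₑ ^ 2 ∂ρ) : ‖u'‖ ≤ ‖A‖ * ‖u‖ := by
  have h : ‖u'‖ₑ ^ 2 ≤ (‖A‖ₑ * ‖u‖ₑ) ^ 2 := by
    rw [mul_pow, hu, hu', ← lintegral_const_mul' _ _ (by simp)]
    exact lintegral_mono fun z => by rw [← mul_pow]; gcongr; exact A.le_opENorm _
  rwa [ENNReal.pow_le_pow_left_iff two_ne_zero, ← ofReal_norm, ← ofReal_norm, ← ofReal_norm,
    ← ENNReal.ofReal_mul (norm_nonneg _), ENNReal.ofReal_le_ofReal_iff (by positivity)] at h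

theorem eLpNorm_two_mul_prod [SFinite ν] {f : X → 𝕜} {g : Y → 𝕜} (hf : AEStronglyMeasurable f μ)
    (hg : AEStronglyMeasurable g ν) :
    eLpNorm (fun z : X × Y => f z.1 * g z.2) 2 (μ.prod ν) = eLpNorm f 2 μ * eLpNorm g 2 ν := by
  refine (ENNReal.pow_right_strictMono two_ne_zero).injective ?_
  simp only [mul_pow, eLpNorm_two_sq, enorm_mul]
  exact lintegral_prod_mul (hf.enorm.pow_const 2) (hg.enorm.pow_const 2)

theorem MemLp.mul_prod [SFinite ν] {f : X → 𝕜} {g : Y → 𝕜} (hf : MemLp f 2 μ)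
    (hg : MemLp g 2 ν) : MemLp (fun z : X × Y => f z.1 * g z.2) 2 (μ.prod ν) :=
  ⟨hf.1.comp_fst.mul hg.1.comp_snd, by
    rw [eLpNorm_two_mul_prod hf.1 hg.1]; exact ENNReal.mul_lt_top hf.2 hg.2⟩

variable [SFinite ν]

noncomputable def Lp.mulProd (f : Lp 𝕜 2 μ) (g : Lp 𝕜 2 ν) : Lp 𝕜 2 (μ.prod ν) :=
  ((Lp.memLp f).mul_prod (Lp.memLp g)).toLp _

theorem Lp.coeFn_mulProd (f : Lp 𝕜 2 μ) (g : Lp 𝕜 2 ν) :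
    ⇑(Lp.mulProd f g) =ᵐ[μ.prod ν] fun z => f z.1 * g z.2 :=
  MemLp.coeFn_toLp _

variable (𝕜 μ ν) in
noncomputable def Lp.tensor : Lp 𝕜 2 μ →ₗ[𝕜] Lp 𝕜 2 ν →ₗ[𝕜] Lp 𝕜 2 (μ.prod ν) :=
  LinearMap.mk₂ 𝕜 Lp.mulProd
    (fun f f' g => by
      ext1
      filter_upwards [coeFn_mulProd (f + f') g, Lp.coeFn_add (mulProd f g) (mulProd f' g),
        coeFn_mulProd f g, coeFn_mulProd f' g,
        Measure.quasiMeasurePreserving_fst.ae_eq_comp (Lp.coeFn_add f f')] with z h h₁ h₂ h₃ h₄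
      simp only [h, h₁, Pi.add_apply, h₂, h₃]
      simp only [Function.comp_apply, Pi.add_apply] at h₄
      rw [h₄, add_mul])
    (fun c f g => by
      ext1
      filter_upwards [coeFn_mulProd (c • f) g, Lp.coeFn_smul c (mulProd f g), coeFn_mulProd f g,
        Measure.quasiMeasurePreserving_fst.ae_eq_comp (Lp.coeFn_smul c f)] with z h h₁ h₂ h₃
      simp only [h, h₁, Pi.smul_apply, h₂]
      simp only [Function.comp_apply, Pi.smul_apply] at h₃
      rw [h₃, smul_eq_mul, smul_eq_mul, mul_assoc])
    (fun f g g' => by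
      ext1
      filter_upwards [coeFn_mulProd f (g + g'), Lp.coeFn_add (mulProd f g) (mulProd f g'),
        coeFn_mulProd f g, coeFn_mulProd f g',
        Measure.quasiMeasurePreserving_snd.ae_eq_comp (Lp.coeFn_add g g')] with z h h₁ h₂ h₃ h₄
      simp only [h, h₁, Pi.add_apply, h₂, h₃]
      simp only [Function.comp_apply, Pi.add_apply] at h₄
      rw [h₄, mul_add])
    (fun c f g => by
      ext1
      filter_upwards [coeFn_mulProd f (c • g), Lp.coeFn_smul c (mulProd f g), coeFn_mulProd f g,
        Measure.quasiMeasurePreserving_snd.ae_eq_comp (Lp.coeFn_smul c g)] with z h h₁ h₂ h₃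
      simp only [h, h₁, Pi.smul_apply, h₂]
      simp only [Function.comp_apply, Pi.smul_apply] at h₃
      rw [h₃, smul_eq_mul, smul_eq_mul, mul_left_comm])

theorem Lp.coeFn_tensor (f : Lp 𝕜 2 μ) (g : Lp 𝕜 2 ν) :
    ⇑(Lp.tensor 𝕜 μ ν f g) =ᵐ[μ.prod ν] fun z => f z.1 * g z.2 :=
  coeFn_mulProd f g

theorem Lp.coeFn_sum_tensor (s : Finset ι) (f : ι → Lp 𝕜 2 μ) (g : ι → Lp 𝕜 2 ν) :
    ⇑(∑ i ∈ s, Lp.tensor 𝕜 μ ν (f i) (g i)) =ᵐ[μ.prod ν] fun z => ∑ i ∈ s, f i z.1 * g i z.2 := by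
  have hsum := Lp.coeFn_sum_smul s (fun _ => (1 : 𝕜)) fun i => Lp.tensor 𝕜 μ ν (f i) (g i)
  simp only [one_smul] at hsum
  filter_upwards [hsum, (eventually_all_finset s).2 fun i _ => coeFn_tensor (f i) (g i)]
    with z hz hterms
  rw [hz]
  exact Finset.sum_congr rfl hterms

theorem Lp.tensor_indicatorConstLp {a : Set X} {b : Set Y} (ha : MeasurableSet a)
    (hb : MeasurableSet b) (hμa : μ a ≠ ∞) (hνb : ν b ≠ ∞) (hab : μ.prod ν (a ×ˢ b) ≠ ∞)
    (c d : 𝕜) :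
    Lp.tensor 𝕜 μ ν (indicatorConstLp 2 ha hμa c) (indicatorConstLp 2 hb hνb d)
      = indicatorConstLp 2 (ha.prod hb) hab (c * d) := by
  ext1
  filter_upwards [coeFn_tensor (indicatorConstLp 2 ha hμa c) (indicatorConstLp 2 hb hνb d),
    indicatorConstLp_coeFn (p := 2) (hs := ha.prod hb) (hμs := hab) (c := c * d),
    Measure.quasiMeasurePreserving_fst.ae_eq_comp
      (indicatorConstLp_coeFn (p := 2) (hs := ha) (hμs := hμa) (c := c)),
    Measure.quasiMeasurePreserving_snd.ae_eq_comp
      (indicatorConstLp_coeFn (p := 2) (hs := hb) (hμs := hνb) (c := d))]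
    with z h h₁ h₂ h₃
  simp only [Function.comp_apply] at h₂ h₃
  rw [h, h₁, h₂, h₃]
  by_cases hz₁ : z.1 ∈ a <;> by_cases hz₂ : z.2 ∈ b <;> simp [indicator, hz₁, hz₂, mem_prod]

theorem Lp.enorm_sum_tensor_sq_eq_lintegral_fst (s : Finset ι) (f : ι → Lp 𝕜 2 μ)
    (g : ι → Lp 𝕜 2 ν) :
    ‖∑ i ∈ s, Lp.tensor 𝕜 μ ν (f i) (g i)‖ₑ ^ 2 = ∫⁻ x, ‖∑ i ∈ s, f i x • g i‖ₑ ^ 2 ∂μ := by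
  have hslice : ∀ x, ∫⁻ y, ‖∑ i ∈ s, f i x * g i y‖ₑ ^ 2 ∂ν = ‖∑ i ∈ s, f i x • g i‖ₑ ^ 2 := by
    intro x
    rw [Lp.enorm_def, eLpNorm_two_sq]
    refine lintegral_congr_ae ?_
    filter_upwards [Lp.coeFn_sum_smul s (fun i => f i x) g] with y hy
    simp_rw [hy, smul_eq_mul]
  have hsq : (fun z => ‖(∑ i ∈ s, Lp.tensor 𝕜 μ ν (f i) (g i)) z‖ₑ ^ 2)
      =ᵐ[μ.prod ν] fun z => ‖∑ i ∈ s, f i z.1 * g i z.2‖ₑ ^ 2 :=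
    (coeFn_sum_tensor s f g).mono fun z hz => by simp only [hz]
  rw [Lp.enorm_def, eLpNorm_two_sq, lintegral_congr_ae hsq,
    lintegral_prod _ (((Lp.aestronglyMeasurable _).enorm.pow_const 2).congr hsq)]
  simp_rw [hslice]

theorem Lp.norm_sum_tensor_map_right_le (B : Lp 𝕜 2 ν →L[𝕜] Lp 𝕜 2 ν) (s : Finset ι)
    (f : ι → Lp 𝕜 2 μ) (g : ι → Lp 𝕜 2 ν) :
    ‖∑ i ∈ s, Lp.tensor 𝕜 μ ν (f i) (B (g i))‖ ≤ ‖B‖ * ‖∑ i ∈ s, Lp.tensor 𝕜 μ ν (f i) (g i)‖ := by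
  refine norm_le_opNorm_mul_of_enorm_sq_eq_lintegral B (fun x => ∑ i ∈ s, f i x • g i)
    (enorm_sum_tensor_sq_eq_lintegral_fst s f g) ?_
  simp_rw [enorm_sum_tensor_sq_eq_lintegral_fst, map_sum, map_smul]

variable [SFinite μ]

theorem Lp.enorm_sum_tensor_sq_eq_lintegral_snd (s : Finset ι) (f : ι → Lp 𝕜 2 μ)
    (g : ι → Lp 𝕜 2 ν) :
    ‖∑ i ∈ s, Lp.tensor 𝕜 μ ν (f i) (g i)‖ₑ ^ 2 = ∫⁻ y, ‖∑ i ∈ s, g i y • f i‖ₑ ^ 2 ∂ν := by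
  have hslice : ∀ y, ∫⁻ x, ‖∑ i ∈ s, f i x * g i y‖ₑ ^ 2 ∂μ = ‖∑ i ∈ s, g i y • f i‖ₑ ^ 2 := by
    intro y
    rw [Lp.enorm_def, eLpNorm_two_sq]
    refine lintegral_congr_ae ?_
    filter_upwards [Lp.coeFn_sum_smul s (fun i => g i y) f] with x hx
    simp_rw [hx, smul_eq_mul, mul_comm]
  have hsq : (fun z => ‖(∑ i ∈ s, Lp.tensor 𝕜 μ ν (f i) (g i)) z‖ₑ ^ 2)
      =ᵐ[μ.prod ν] fun z => ‖∑ i ∈ s, f i z.1 * g i z.2‖ₑ ^ 2 :=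
    (coeFn_sum_tensor s f g).mono fun z hz => by simp only [hz]
  rw [Lp.enorm_def, eLpNorm_two_sq, lintegral_congr_ae hsq,
    lintegral_prod_symm _ (((Lp.aestronglyMeasurable _).enorm.pow_const 2).congr hsq)]
  simp_rw [hslice]

theorem Lp.norm_sum_tensor_map_left_le (A : Lp 𝕜 2 μ →L[𝕜] Lp 𝕜 2 μ) (s : Finset ι)
    (f : ι → Lp 𝕜 2 μ) (g : ι → Lp 𝕜 2 ν) :
    ‖∑ i ∈ s, Lp.tensor 𝕜 μ ν (A (f i)) (g i)‖ ≤ ‖A‖ * ‖∑ i ∈ s, Lp.tensor 𝕜 μ ν (f i) (g i)‖ := by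
  refine norm_le_opNorm_mul_of_enorm_sq_eq_lintegral A (fun y => ∑ i ∈ s, g i y • f i)
    (enorm_sum_tensor_sq_eq_lintegral_snd s f g) ?_
  simp_rw [enorm_sum_tensor_sq_eq_lintegral_snd, map_sum, map_smul]

theorem Lp.norm_sum_tensor_map_le (A : Lp 𝕜 2 μ →L[𝕜] Lp 𝕜 2 μ) (B : Lp 𝕜 2 ν →L[𝕜] Lp 𝕜 2 ν)
    (s : Finset ι) (f : ι → Lp 𝕜 2 μ) (g : ι → Lp 𝕜 2 ν) :
    ‖∑ i ∈ s, Lp.tensor 𝕜 μ ν (A (f i)) (B (g i))‖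
      ≤ ‖A‖ * ‖B‖ * ‖∑ i ∈ s, Lp.tensor 𝕜 μ ν (f i) (g i)‖ :=
  calc _ ≤ ‖A‖ * ‖∑ i ∈ s, Lp.tensor 𝕜 μ ν (f i) (B (g i))‖ :=
        norm_sum_tensor_map_left_le A s f fun i => B (g i)
    _ ≤ ‖A‖ * (‖B‖ * ‖∑ i ∈ s, Lp.tensor 𝕜 μ ν (f i) (g i)‖) := by
        gcongr; exact norm_sum_tensor_map_right_le B s f g
    _ = _ := (mul_assoc _ _ _).symm

end Tensor

section TensorDensity

variable {𝕜 X Y : Type*} [RCLike 𝕜] [MeasurableSpace X] [MeasurableSpace Y]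
  {μ : Measure X} {ν : Measure Y} [SigmaFinite μ] [SigmaFinite ν]

theorem Lp.dense_range_lift_tensor :
    Dense (LinearMap.range (TensorProduct.lift (Lp.tensor 𝕜 μ ν)) : Set (Lp 𝕜 2 (μ.prod ν))) := by
  set L := TensorProduct.lift (Lp.tensor 𝕜 μ ν)
  have hS : (LinearMap.range L).toAddSubgroup.topologicalClosure = ⊤ := by
    refine Lp.addSubgroup_eq_top_of_indicatorsMem ofNat_ne_top
      (AddSubgroup.isClosed_topologicalClosure _) generateFrom_prod.symm isPiSystem_prod
      (R := fun n => spanningSets μ n ×ˢ spanningSets ν n)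
      (fun n => mem_image2_of_mem (measurableSet_spanningSets μ n) (measurableSet_spanningSets ν n))
      (fun _ _ hmn => prod_mono (monotone_spanningSets μ hmn) (monotone_spanningSets ν hmn))
      (fun n => by
        rw [Measure.prod_prod]
        exact mul_ne_top (measure_spanningSets_lt_top μ n).ne (measure_spanningSets_lt_top ν n).ne)
      (by rw [iUnion_prod_of_monotone (monotone_spanningSets μ) (monotone_spanningSets ν),
        iUnion_spanningSets, iUnion_spanningSets, univ_prod_univ]) ?_
    rintro _ ⟨a, ha, b, hb, rfl⟩ n
    dsimp only
    rw [prod_inter_prod]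
    intro _ hμ c
    have ha' := ha.inter (measurableSet_spanningSets μ n)
    have hb' := hb.inter (measurableSet_spanningSets ν n)
    have hμa : μ (a ∩ spanningSets μ n) ≠ ∞ :=
      ne_top_of_le_ne_top (measure_spanningSets_lt_top μ n).ne (measure_mono inter_subset_right)
    have hνb : ν (b ∩ spanningSets ν n) ≠ ∞ :=
      ne_top_of_le_ne_top (measure_spanningSets_lt_top ν n).ne (measure_mono inter_subset_right)
    refine AddSubgroup.le_topologicalClosure _
      ⟨indicatorConstLp 2 ha' hμa c ⊗ₜ indicatorConstLp 2 hb' hνb (1 : 𝕜), ?_⟩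
    rw [TensorProduct.lift.tmul, tensor_indicatorConstLp ha' hb' hμa hνb hμ, mul_one]
  rw [dense_iff_closure_eq]
  simpa using congrArg (fun S : AddSubgroup (Lp 𝕜 2 (μ.prod ν)) => (S : Set (Lp 𝕜 2 (μ.prod ν))))
    hS

theorem Lp.opNorm_le_of_apply_tensor {κ : Type*}
    (T : Lp 𝕜 2 (μ.prod ν) →L[𝕜] Lp 𝕜 2 (μ.prod ν)) (P : Finset κ)
    (A : κ → Lp 𝕜 2 μ →L[𝕜] Lp 𝕜 2 μ) (B : κ → Lp 𝕜 2 ν →L[𝕜] Lp 𝕜 2 ν)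
    (hT : ∀ f g, T (Lp.tensor 𝕜 μ ν f g) = ∑ V ∈ P, Lp.tensor 𝕜 μ ν (A V f) (B V g)) :
    ‖T‖ ≤ ∑ V ∈ P, ‖A V‖ * ‖B V‖ := by
  have hrange : ∀ t, ‖T (TensorProduct.lift (Lp.tensor 𝕜 μ ν) t)‖
      ≤ (∑ V ∈ P, ‖A V‖ * ‖B V‖) * ‖TensorProduct.lift (Lp.tensor 𝕜 μ ν) t‖ := by
    intro t
    obtain ⟨s, rfl⟩ := TensorProduct.exists_finset t
    simp only [map_sum, TensorProduct.lift.tmul, hT]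
    rw [Finset.sum_comm, Finset.sum_mul]
    exact (norm_sum_le _ _).trans
      (Finset.sum_le_sum fun V _ => norm_sum_tensor_map_le (A V) (B V) s Prod.fst Prod.snd)
  refine T.opNorm_le_bound (Finset.sum_nonneg fun _ _ => by positivity) fun u => ?_
  refine dense_range_lift_tensor.induction
    (P := fun u => ‖T u‖ ≤ (∑ V ∈ P, ‖A V‖ * ‖B V‖) * ‖u‖) ?_
    (isClosed_le (continuous_norm.comp T.continuous) (continuous_const.mul continuous_norm)) u
  rintro _ ⟨t, rfl⟩
  exact hrange t

end TensorDensity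

end MeasureTheory

section Cancellation

variable {k : ℕ}

theorem deltaK_eq_mixedDiff {E : Type*} [AddCommGroup E] [Module ℂ E]
    (H : (Fin k → ℝ) → E) (K : Finset (Fin k)) (h s : Fin k → ℝ) :
    deltaK H K h s = mixedDiff (fun U => H (U.piecewise (s + h) s)) K :=
  Finset.sum_congr rfl fun U _ => by
    rw [← Int.cast_smul_eq_zsmul ℂ]
    push_cast
    rfl

theorem deltaK_congr_incr {E : Type*} [AddCommGroup E] [Module ℂ E]
    (H : (Fin k → ℝ) → E) (K : Finset (Fin k)) {h h' : Fin k → ℝ} (hh : ∀ i ∈ K, h i = h' i)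
    (s : Fin k → ℝ) : deltaK H K h s = deltaK H K h' s :=
  Finset.sum_congr rfl fun U hU => by
    congr 2
    funext i
    split_ifs with hi
    · rw [hh i (Finset.mem_powerset.1 hU hi)]
    · rfl

/-- In the notation of the paper, the left-hand side is `T_h^V Δ_h^J H_s`. -/
theorem deltaK_piecewise {E : Type*} [AddCommGroup E] [Module ℂ E]
    (H : (Fin k → ℝ) → E) {V J : Finset (Fin k)} (hVJ : Disjoint V J) (h s : Fin k → ℝ) :
    deltaK H J h (V.piecewise (s + h) s)
      = mixedDiff (fun W => H ((V ∪ W).piecewise (s + h) s)) J := by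
  rw [deltaK_eq_mixedDiff]
  refine Finset.sum_congr rfl fun W hW => ?_
  dsimp only
  congr 2
  funext i
  have hWV : i ∈ W → i ∉ V := fun hi => Finset.disjoint_right.1 hVJ (Finset.mem_powerset.1 hW hi)
  by_cases hiW : i ∈ W <;> by_cases hiV : i ∈ V <;>
    simp_all [Finset.piecewise]

theorem deltaK_apply_tensor {X Y : Type*} [MeasurableSpace X] [MeasurableSpace Y]
    {μ : Measure X} {ν : Measure Y} [SFinite ν]
    (H1 : (Fin k → ℝ) → Lp ℂ 2 μ →L[ℂ] Lp ℂ 2 μ) (H2 : (Fin k → ℝ) → Lp ℂ 2 ν →L[ℂ] Lp ℂ 2 ν)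
    (H12 : (Fin k → ℝ) → Lp ℂ 2 (μ.prod ν) →L[ℂ] Lp ℂ 2 (μ.prod ν))
    (hH12 : ∀ s f g, H12 s (Lp.tensor ℂ μ ν f g) = Lp.tensor ℂ μ ν (H1 s f) (H2 s g))
    (K : Finset (Fin k)) (h s : Fin k → ℝ) (f : Lp ℂ 2 μ) (g : Lp ℂ 2 ν) :
    deltaK H12 K h s (Lp.tensor ℂ μ ν f g) = ∑ V ∈ K.powerset,
      Lp.tensor ℂ μ ν (deltaK H1 V h s f) (deltaK H2 (K \ V) h (V.piecewise (s + h) s) g) := by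
  let β := (Lp.tensor ℂ μ ν).compl₁₂ (ContinuousLinearMap.apply ℂ _ f).toLinearMap
    (ContinuousLinearMap.apply ℂ _ g).toLinearMap
  calc deltaK H12 K h s (Lp.tensor ℂ μ ν f g)
      = mixedDiff (fun U => β (H1 (U.piecewise (s + h) s)) (H2 (U.piecewise (s + h) s))) K := by
        rw [deltaK_eq_mixedDiff, ← ContinuousLinearMap.apply_apply (Lp.tensor ℂ μ ν f g),
          map_mixedDiff]
        simp [β, hH12]
    _ = _ := by
        rw [mixedDiff_leibniz]
        refine Finset.sum_congr rfl fun V _ => ?_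
        rw [deltaK_piecewise H2 Finset.disjoint_sdiff, deltaK_eq_mixedDiff]
        rfl

variable {E : Type*} [NormedAddCommGroup E] [NormedSpace ℂ E]

def HasCancellation (H : (Fin k → ℝ) → E) (Q : Set (Fin k → ℝ)) (C : ℝ) : Prop :=
  ∀ (K : Finset (Fin k)) (s h : Fin k → ℝ), (∀ i, 0 < s i) → (∀ i, 0 ≤ h i) →
    s ∈ Q → s + h ∈ Q → ‖deltaK H K h s‖ ≤ C * ∏ i ∈ K, h i / s i

theorem HasCancellation.norm_deltaK_piecewise_le {H : (Fin k → ℝ) → E} {Q : Set (Fin k → ℝ)}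
    {C : ℝ} (hH : HasCancellation H Q C) (hQ : Q.OrdConnected) {s h : Fin k → ℝ}
    (hs : ∀ i, 0 < s i) (hh : ∀ i, 0 ≤ h i) (hsQ : s ∈ Q) (hshQ : s + h ∈ Q)
    {V J : Finset (Fin k)} (hVJ : Disjoint V J) :
    ‖deltaK H J h (V.piecewise (s + h) s)‖ ≤ |C| * ∏ i ∈ J, h i / s i := by
  set s' := V.piecewise (s + h) s
  set h' := J.piecewise h 0
  have hJV : ∀ i ∈ J, i ∉ V := fun i hi => Finset.disjoint_right.1 hVJ hi
  have hs' : ∀ i, s i ≤ s' i ∧ s' i ≤ s i + h i := fun i => by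
    by_cases hi : i ∈ V <;> simp [s', hi, hh i]
  have hh' : ∀ i, 0 ≤ h' i := fun i => by by_cases hi : i ∈ J <;> simp [h', hi, hh i]
  have hs'h' : ∀ i, s i ≤ s' i + h' i ∧ s' i + h' i ≤ s i + h i := fun i => by
    by_cases hi : i ∈ J
    · simp [s', h', hi, hJV i hi, hh i]
    · simp only [h', Finset.piecewise_eq_of_notMem _ _ _ hi, Pi.zero_apply, add_zero]
      exact hs' i
  -- `s'` and `s' + h'` both lie in the box `[s, s + h]`, hence in `Q`.
  have hbound := hH J s' h' (fun i => (hs i).trans_le (hs' i).1) hh'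
    (hQ.out hsQ hshQ ⟨fun i => (hs' i).1, fun i => (hs' i).2⟩)
    (hQ.out hsQ hshQ ⟨fun i => (hs'h' i).1, fun i => (hs'h' i).2⟩)
  have hprod : ∏ i ∈ J, h' i / s' i = ∏ i ∈ J, h i / s i :=
    Finset.prod_congr rfl fun i hi => by simp [s', h', hi, hJV i hi]
  rw [deltaK_congr_incr H J (h' := h') (fun i hi => by simp [h', hi]), ← hprod]
  exact hbound.trans (mul_le_mul_of_nonneg_right (le_abs_self C)
    (Finset.prod_nonneg fun i _ => div_nonneg (hh' i) ((hs i).trans_le (hs' i).1).le))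

end Cancellation

theorem stmt9 (d₁ d₂ k : ℕ)
    (H1 : (Fin k → ℝ) →
      (Lp ℂ 2 (volume : Measure (Fin d₁ → ℝ)) →L[ℂ] Lp ℂ 2 (volume : Measure (Fin d₁ → ℝ))))
    (H2 : (Fin k → ℝ) →
      (Lp ℂ 2 (volume : Measure (Fin d₂ → ℝ)) →L[ℂ] Lp ℂ 2 (volume : Measure (Fin d₂ → ℝ))))
    (H12 : (Fin k → ℝ) →
      (Lp ℂ 2 (volume : Measure ((Fin d₁ → ℝ) × (Fin d₂ → ℝ))) →L[ℂ]
        Lp ℂ 2 (volume : Measure ((Fin d₁ → ℝ) × (Fin d₂ → ℝ)))))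
    (Q : Set (Fin k → ℝ))
    (hQconv : ∀ s t u : Fin k → ℝ, s ∈ Q → t ∈ Q →
      (∀ i, s i ≤ u i ∧ u i ≤ t i) → u ∈ Q)
    -- `H12 s` acts as the tensor product `H1 s ⊗ H2 s` on simple tensors
    (htensor : ∀ (s : Fin k → ℝ) (f : Lp ℂ 2 (volume : Measure (Fin d₁ → ℝ)))
        (g : Lp ℂ 2 (volume : Measure (Fin d₂ → ℝ)))
        (hfg : MemLp (fun z : (Fin d₁ → ℝ) × (Fin d₂ → ℝ) => f z.1 * g z.2) 2 volume),
      (H12 s (hfg.toLp _) : ((Fin d₁ → ℝ) × (Fin d₂ → ℝ)) → ℂ) =ᵐ[volume]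
        fun z => H1 s f z.1 * H2 s g z.2)
    (C₁ C₂ : ℝ)
    (hH1 : ∀ (K : Finset (Fin k)) (s h : Fin k → ℝ), (∀ i, 0 < s i) → (∀ i, 0 ≤ h i) →
      s ∈ Q → s + h ∈ Q → ‖deltaK H1 K h s‖ ≤ C₁ * ∏ i ∈ K, h i / s i)
    (hH2 : ∀ (K : Finset (Fin k)) (s h : Fin k → ℝ), (∀ i, 0 < s i) → (∀ i, 0 ≤ h i) →
      s ∈ Q → s + h ∈ Q → ‖deltaK H2 K h s‖ ≤ C₂ * ∏ i ∈ K, h i / s i) :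
    ∃ C : ℝ, ∀ (K : Finset (Fin k)) (s h : Fin k → ℝ), (∀ i, 0 < s i) → (∀ i, 0 ≤ h i) →
      s ∈ Q → s + h ∈ Q → ‖deltaK H12 K h s‖ ≤ C * ∏ i ∈ K, h i / s i := by
  have hQ : Q.OrdConnected := ⟨fun s hs t ht u hu => hQconv s t u hs ht fun i => ⟨hu.1 i, hu.2 i⟩⟩
  have hH12 : ∀ s f g, H12 s (Lp.tensor ℂ volume volume f g)
      = Lp.tensor ℂ volume volume (H1 s f) (H2 s g) :=
    fun s f g => Lp.ext ((htensor s f g ((Lp.memLp f).mul_prod (Lp.memLp g))).trans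
      (Lp.coeFn_tensor _ _).symm)
  refine ⟨2 ^ k * (|C₁| * |C₂|), fun K s h hs hh hsQ hshQ => ?_⟩
  have hprod : ∀ J : Finset (Fin k), 0 ≤ ∏ i ∈ J, h i / s i :=
    fun J => Finset.prod_nonneg fun i _ => div_nonneg (hh i) (hs i).le
  calc ‖deltaK H12 K h s‖
      ≤ ∑ V ∈ K.powerset, ‖deltaK H1 V h s‖ * ‖deltaK H2 (K \ V) h (V.piecewise (s + h) s)‖ :=
        Lp.opNorm_le_of_apply_tensor _ _ _ _ (deltaK_apply_tensor H1 H2 H12 hH12 K h s)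
    _ ≤ ∑ V ∈ K.powerset, (|C₁| * ∏ i ∈ V, h i / s i) * (|C₂| * ∏ i ∈ K \ V, h i / s i) := by
        refine Finset.sum_le_sum fun V _ => mul_le_mul ?_
          (HasCancellation.norm_deltaK_piecewise_le hH2 hQ hs hh hsQ hshQ Finset.disjoint_sdiff)
          (norm_nonneg _) (mul_nonneg (abs_nonneg _) (hprod V))
        simpa using HasCancellation.norm_deltaK_piecewise_le hH1 hQ hs hh hsQ hshQ
          (Finset.disjoint_empty_left V)
    _ = 2 ^ K.card * (|C₁| * |C₂|) * ∏ i ∈ K, h i / s i :=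
        Finset.sum_powerset_mul_prod_mul_prod_sdiff K _ _ _
    _ ≤ 2 ^ k * (|C₁| * |C₂|) * ∏ i ∈ K, h i / s i := by
        gcongr
        · exact hprod K
        · exact one_le_two
        · simpa using Finset.card_le_univ K
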